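/- For every real x ≥ 0 and all r_a, r_b ∈ [0,1], the following inequality holds: (2 − r_b/5)·x² + 2x·(√((1+r_a)(1+r_b)) − 3) − r_a/5 + 2 ≥ 0. -/

import Mathlib

/-! The quadratic in `x` has positive leading coefficient `2 - r_b/5`, so it suffices that its
discriminant is nonpositive, i.e. `(3 - s)² ≤ (2 - r_b/5)(2 - r_a/5)` for `s = √((1+r_a)(1+r_b))`.
Put `t = r_a + r_b + r_a r_b ∈ [0, 3]`. Then `1 ≤ 3 - s` as `s ≤ 2`, and `3 - s ≤ 2 - t/3` because
the square root lies above its chord on `[1, 4]`; finally `(2 - t/3)² ≤ (2 - r_b/5)(2 - r_a/5)` is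
an elementary polynomial inequality on `[0,1]²`. -/

lemma quadratic_nonneg_of_sq_le_mul {K : Type*} [Field K] [LinearOrder K] [IsStrictOrderedRing K]
    {a b c : K} (ha : 0 < a) (hdisc : b ^ 2 ≤ a * c) (x : K) :
    0 ≤ a * x ^ 2 + 2 * b * x + c := by
  have hscaled : 0 ≤ a * (a * x ^ 2 + 2 * b * x + c) :=
    calc 0 ≤ (a * x + b) ^ 2 + (a * c - b ^ 2) := by nlinarith [sq_nonneg (a * x + b)]
      _ = a * (a * x ^ 2 + 2 * b * x + c) := by ring
  exact nonneg_of_mul_nonneg_right hscaled ha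

lemma one_add_div_three_le_sqrt_one_add {t : ℝ} (ht0 : 0 ≤ t) (ht3 : t ≤ 3) :
    1 + t / 3 ≤ √(1 + t) :=
  Real.le_sqrt_of_sq_le (by nlinarith)

lemma sq_two_sub_div_three_le {ra rb : ℝ} (hra0 : 0 ≤ ra) (hra1 : ra ≤ 1) (hrb0 : 0 ≤ rb)
    (hrb1 : rb ≤ 1) :
    (2 - (ra + rb + ra * rb) / 3) ^ 2 ≤ (2 - rb / 5) * (2 - ra / 5) := by
  have hprod : 0 ≤ ra * rb := mul_nonneg hra0 hrb0
  have ht3 : ra + rb + ra * rb ≤ 3 := by nlinarith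
  nlinarith [mul_nonneg (by positivity : 0 ≤ ra + rb + ra * rb) (sub_nonneg.2 ht3)]

theorem scalar_compat_phi4_gamma8 (x ra rb : ℝ)
    (hra0 : 0 ≤ ra) (hra1 : ra ≤ 1) (hrb0 : 0 ≤ rb) (hrb1 : rb ≤ 1) :
    0 ≤ (2 - rb / 5) * x ^ 2
        + 2 * x * (Real.sqrt ((1 + ra) * (1 + rb)) - 3)
        - ra / 5 + 2 := by
  set s := √((1 + ra) * (1 + rb)) with hs
  have hs_lower : 1 + (ra + rb + ra * rb) / 3 ≤ s := by
    rw [hs, show (1 + ra) * (1 + rb) = 1 + (ra + rb + ra * rb) by ring]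
    exact one_add_div_three_le_sqrt_one_add (by positivity) (by nlinarith)
  have hs_upper : s ≤ 2 := Real.sqrt_le_iff.2 ⟨by norm_num, by nlinarith⟩
  have hdisc : (s - 3) ^ 2 ≤ (2 - rb / 5) * (2 - ra / 5) :=
    calc (s - 3) ^ 2 = (3 - s) ^ 2 := by ring
      _ ≤ (2 - (ra + rb + ra * rb) / 3) ^ 2 := pow_le_pow_left₀ (by linarith) (by linarith) 2
      _ ≤ (2 - rb / 5) * (2 - ra / 5) := sq_two_sub_div_three_le hra0 hra1 hrb0 hrb1
  have hquad := quadratic_nonneg_of_sq_le_mul (by linarith) hdisc x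
  linarith
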